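/- Let X ∼ N(μ, Σ) on ℝ^n with Σ positive definite partitioned into index sets S and U, and let G ∼ N(0, Σ^g) be independent noise whose block Σ^g_{SS} = σ_s² I and whose S and U blocks are independent (Σ^g_{SU} = 0). Set Z = X + G. Then for any s_i, s_j ∈ ℝ^{|S|} and λ > 1, D_λ(Law(Z | X_S = s_i) ‖ Law(Z | X_S = s_j)) = (λ/2)[ (1/σ_s²)‖s_i − s_j‖² + (s_i − s_j)ᵀ Σ_{SS}^{-1} Σ_{SU} (Σ_{U|S} + Σ^g_{UU})^{-1} Σ_{US} Σ_{SS}^{-1} (s_i − s_j) ]. -/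

import Mathlib

open MeasureTheory

/-- Rényi divergence of order `l > 1`:
`D_l(P‖Q) = (l-1)⁻¹ * log ∫ (dP/dQ)^l dQ`. -/
noncomputable def renyiDiv {Ω : Type*} [MeasurableSpace Ω] (l : ℝ) (P Q : Measure Ω) : ℝ :=
  (l - 1)⁻¹ * Real.log (∫ x, ((P.rnDeriv Q x).toReal) ^ l ∂Q)

open Matrix

/-- Density of a multivariate Gaussian `N(μ, S)` with respect to Lebesgue measure. -/
noncomputable def gaussianDensity {ι : Type*} [Fintype ι] [DecidableEq ι]
    (μ : ι → ℝ) (S : Matrix ι ι ℝ) (x : ι → ℝ) : ℝ :=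
  (Real.sqrt ((2 * Real.pi) ^ (Fintype.card ι) * S.det))⁻¹ *
    Real.exp (-(1/2) * ((x - μ) ⬝ᵥ (S⁻¹ *ᵥ (x - μ))))

/-- The multivariate Gaussian measure `N(μ, S)` on `ι → ℝ`. -/
noncomputable def multivariateGaussian {ι : Type*} [Fintype ι] [DecidableEq ι]
    (μ : ι → ℝ) (S : Matrix ι ι ℝ) : Measure (ι → ℝ) :=
  volume.withDensity (fun x => ENNReal.ofReal (gaussianDensity μ S x))

/-- The conditional law of `Z = X + G` given `X_S = s`: on the secret block `S` it is
`N(s, σ_s² I)`, independent of the `U` block which is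
`N(μ_U + Σ_US Σ_SS⁻¹ (s − μ_S), Σ_{U|S} + Σ^g_UU)`. -/
noncomputable def condLaw {m k : ℕ} (μ : (Fin m ⊕ Fin k) → ℝ)
    (S Sg : Matrix (Fin m ⊕ Fin k) (Fin m ⊕ Fin k) ℝ) (σs : ℝ) (s : Fin m → ℝ) :
    Measure ((Fin m ⊕ Fin k) → ℝ) :=
  multivariateGaussian
    (Sum.elim s ((μ ∘ Sum.inr) + S.toBlocks₂₁ *ᵥ ((S.toBlocks₁₁)⁻¹ *ᵥ (s - μ ∘ Sum.inl))))
    (Matrix.fromBlocks (σs ^ 2 • (1 : Matrix (Fin m) (Fin m) ℝ)) 0 0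
      ((S.toBlocks₂₂ - S.toBlocks₂₁ * (S.toBlocks₁₁)⁻¹ * S.toBlocks₁₂) + Sg.toBlocks₂₂))

/-- `Σ_eff = Σ_SS⁻¹ Σ_SU (Σ_{U|S} + Σ^g_UU)⁻¹ Σ_US Σ_SS⁻¹`. -/
noncomputable def SigmaEff {m k : ℕ}
    (S Sg : Matrix (Fin m ⊕ Fin k) (Fin m ⊕ Fin k) ℝ) : Matrix (Fin m) (Fin m) ℝ :=
  (S.toBlocks₁₁)⁻¹ * S.toBlocks₁₂
    * ((S.toBlocks₂₂ - S.toBlocks₂₁ * (S.toBlocks₁₁)⁻¹ * S.toBlocks₁₂) + Sg.toBlocks₂₂)⁻¹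
    * S.toBlocks₂₁ * (S.toBlocks₁₁)⁻¹

/-!
Given `X_S = s`, the law of `Z` is Gaussian with the block-diagonal covariance
`diag(σ_s² I, Σ_{U|S} + Σ^g_UU)`, which does not depend on `s`, and a mean affine in `s`: the means
for `s_i` and `s_j` differ by `Δ = (s_i - s_j, Σ_US Σ_SS⁻¹ (s_i - s_j))`. For two Gaussian densities
with common covariance `Σ`, `(p₁ / p₂)^λ p₂` is `exp (λ (λ - 1) / 2 · Δᵀ Σ⁻¹ Δ)` times the Gaussian
density centred at `λ μ₁ + (1 - λ) μ₂`, so `D_λ = λ / 2 · Δᵀ Σ⁻¹ Δ`, and inverting the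
block-diagonal covariance splits `Δᵀ Σ⁻¹ Δ` into the two terms of the formula.
-/

open Real

namespace Matrix

theorem mul_dotProduct_mulVec_add_mul_dotProduct_mulVec {ι R : Type*} [Fintype ι] [CommRing R]
    (A : Matrix ι ι R) (u v : ι → R) (t : R) :
    t * (u ⬝ᵥ (A *ᵥ u)) + (1 - t) * (v ⬝ᵥ (A *ᵥ v))
      = (t • u + (1 - t) • v) ⬝ᵥ (A *ᵥ (t • u + (1 - t) • v))
        + t * (1 - t) * ((u - v) ⬝ᵥ (A *ᵥ (u - v))) := by
  simp only [mulVec_add, mulVec_sub, mulVec_smul, dotProduct_add, add_dotProduct,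
    dotProduct_sub, sub_dotProduct, dotProduct_smul, smul_dotProduct, smul_eq_mul]
  ring

section Blocks

open scoped ComplexOrder

variable {m n 𝕜 : Type*} [RCLike 𝕜]

theorem IsHermitian.toBlocks₂₁_eq {S : Matrix (m ⊕ n) (m ⊕ n) 𝕜} (hS : S.IsHermitian) :
    S.toBlocks₂₁ = S.toBlocks₁₂ᴴ := by
  ext i j
  exact (hS.apply _ _).symm

theorem PosDef.toBlocks₁₁ {S : Matrix (m ⊕ n) (m ⊕ n) 𝕜} (hS : S.PosDef) : S.toBlocks₁₁.PosDef :=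
  hS.submatrix Sum.inl_injective

theorem PosSemidef.toBlocks₂₂ {S : Matrix (m ⊕ n) (m ⊕ n) 𝕜} (hS : S.PosSemidef) :
    S.toBlocks₂₂.PosSemidef :=
  hS.submatrix Sum.inr

theorem PosDef.schurComplement₁₁ [Fintype m] [Fintype n] [DecidableEq m] [DecidableEq n]
    {S : Matrix (m ⊕ n) (m ⊕ n) 𝕜} (hS : S.PosDef) :
    (S.toBlocks₂₂ - S.toBlocks₂₁ * S.toBlocks₁₁⁻¹ * S.toBlocks₁₂).PosDef := by
  have hA := hS.toBlocks₁₁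
  have := hA.isUnit.invertible
  have hblocks : S = fromBlocks S.toBlocks₁₁ S.toBlocks₁₂ S.toBlocks₁₂ᴴ S.toBlocks₂₂ := by
    rw [← hS.isHermitian.toBlocks₂₁_eq, fromBlocks_toBlocks]
  rw [hS.isHermitian.toBlocks₂₁_eq]
  have hpsd := (PosDef.fromBlocks₁₁ _ _ hA).1 (hblocks ▸ hS.posSemidef)
  refine hpsd.posDef_iff_det_ne_zero.2 fun h => hS.det_pos.ne' ?_
  rw [hblocks, det_fromBlocks₁₁, invOf_eq_nonsing_inv, h, mul_zero]

theorem PosDef.fromBlocks_zero [Fintype m] [Fintype n] [DecidableEq m] [DecidableEq n]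
    {A : Matrix m m 𝕜} {D : Matrix n n 𝕜} (hA : A.PosDef) (hD : D.PosDef) :
    (fromBlocks A 0 0 D).PosDef := by
  have := hA.isUnit.invertible
  have hpsd : (fromBlocks A 0 0 D).PosSemidef := by
    simpa using (PosDef.fromBlocks₁₁ (0 : Matrix m n 𝕜) D hA).2 (by simpa using hD.posSemidef)
  rw [hpsd.posDef_iff_det_ne_zero, det_fromBlocks_zero₁₂]
  exact mul_ne_zero hA.det_pos.ne' hD.det_pos.ne'

end Blocks

theorem inv_fromBlocks_zero_zero {m n α : Type*} [Fintype m] [Fintype n] [DecidableEq m]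
    [DecidableEq n] [CommRing α] {A : Matrix m m α} {D : Matrix n n α}
    (hAD : IsUnit A ↔ IsUnit D) : (fromBlocks A 0 0 D)⁻¹ = fromBlocks A⁻¹ 0 0 D⁻¹ := by
  simp [inv_fromBlocks_zero₁₂_of_isUnit_iff _ _ _ hAD]

theorem sumElim_dotProduct_fromBlocks_zero_mulVec {m n α : Type*} [Fintype m] [Fintype n]
    [NonUnitalNonAssocSemiring α] (A : Matrix m m α) (D : Matrix n n α) (u : m → α)
    (v : n → α) :
    Sum.elim u v ⬝ᵥ (fromBlocks A 0 0 D *ᵥ Sum.elim u v) = u ⬝ᵥ (A *ᵥ u) + v ⬝ᵥ (D *ᵥ v) := by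
  simp [fromBlocks_mulVec, sumElim_dotProduct_sumElim]

end Matrix

theorem renyiDiv_withDensity_ofReal {α : Type*} [MeasurableSpace α] {μ : Measure α}
    [SigmaFinite μ] {p q : α → ℝ} (hp : Measurable p) (hq : Measurable q) (hp₀ : ∀ x, 0 ≤ p x)
    (hq₀ : ∀ x, 0 < q x) (l : ℝ) :
    renyiDiv l (μ.withDensity fun x => ENNReal.ofReal (p x))
        (μ.withDensity fun x => ENNReal.ofReal (q x))
      = (l - 1)⁻¹ * log (∫ x, (p x / q x) ^ l * q x ∂μ) := by
  set Q := μ.withDensity fun x => ENNReal.ofReal (q x)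
  have hratio : Measurable fun x => ENNReal.ofReal (p x / q x) := (hp.div hq).ennreal_ofReal
  have hP : μ.withDensity (fun x => ENNReal.ofReal (p x))
      = Q.withDensity fun x => ENNReal.ofReal (p x / q x) := by
    rw [← withDensity_mul _ hq.ennreal_ofReal hratio]
    congr 1 with x
    rw [Pi.mul_apply, ← ENNReal.ofReal_mul (hq₀ x).le, mul_div_cancel₀ _ (hq₀ x).ne']
  have hrn : ∫ x, ((μ.withDensity fun x => ENNReal.ofReal (p x)).rnDeriv Q x).toReal ^ l ∂Q
      = ∫ x, (p x / q x) ^ l ∂Q := by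
    refine integral_congr_ae ?_
    filter_upwards [hP ▸ Measure.rnDeriv_withDensity Q hratio] with x hx
    rw [hx, ENNReal.toReal_ofReal (div_nonneg (hp₀ x) (hq₀ x).le)]
  rw [renyiDiv, hrn, integral_withDensity_eq_integral_toReal_smul hq.ennreal_ofReal
    (ae_of_all _ fun _ => ENNReal.ofReal_lt_top)]
  simp_rw [ENNReal.toReal_ofReal (hq₀ _).le, smul_eq_mul, mul_comm (q _)]

section Gaussian

variable {ι : Type*} [Fintype ι] [DecidableEq ι]

theorem integral_comp_mulVec {E : Type*} [NormedAddCommGroup E] [NormedSpace ℝ E]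
    {M : Matrix ι ι ℝ} (hM : M.det ≠ 0) (f : (ι → ℝ) → E) :
    ∫ x, f (M *ᵥ x) = |M.det|⁻¹ • ∫ x, f x := by
  let e := (Matrix.toLin' M).equivOfDetNeZero (by rwa [LinearMap.det_toLin'])
  have he : MeasurableEmbedding (toLin' M) :=
    (LinearEquiv.toContinuousLinearEquiv e).toHomeomorph.measurableEmbedding
  simp_rw [← toLin'_apply]
  rw [← he.integral_map, Real.map_matrix_volume_pi_eq_smul_volume_pi hM,
    integral_smul_measure, ENNReal.toReal_ofReal (abs_nonneg _), abs_inv]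

omit [DecidableEq ι] in
theorem integral_exp_neg_half_dotProduct_self :
    ∫ x : ι → ℝ, exp (-(1 / 2) * (x ⬝ᵥ x)) = √(2 * π) ^ Fintype.card ι := by
  have hprod (x : ι → ℝ) : exp (-(1 / 2) * (x ⬝ᵥ x)) = ∏ i, exp (-(1 / 2) * x i ^ 2) := by
    simp only [← exp_sum, dotProduct, Finset.mul_sum, sq]
  simp_rw [hprod]
  rw [volume_pi, integral_fintype_prod_eq_pow (fun t : ℝ => exp (-(1 / 2) * t ^ 2)),
    integral_gaussian]
  congr 2
  field_simp

open scoped MatrixOrder in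
theorem integral_exp_neg_half_dotProduct_inv_mulVec {S : Matrix ι ι ℝ} (hS : S.PosDef) :
    ∫ x, exp (-(1 / 2) * (x ⬝ᵥ (S⁻¹ *ᵥ x))) = √((2 * π) ^ Fintype.card ι * S.det) := by
  set R := CFC.sqrt S
  have hRR : R * R = S := CFC.sqrt_mul_sqrt_self S hS.posSemidef.nonneg
  have hRsymm : Rᵀ = R := (CFC.sqrt_nonneg S).posSemidef.isHermitian
  have hdetR : R.det = √S.det := by
    simpa [RCLike.sqrt_of_nonneg hS.posSemidef.det_nonneg] using hS.posSemidef.det_sqrt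
  have hdetR₀ : R.det ≠ 0 := by rw [hdetR]; exact (sqrt_pos.2 hS.det_pos).ne'
  have hunit : IsUnit R.det := hdetR₀.isUnit
  have hquad (x : ι → ℝ) : (R *ᵥ x) ⬝ᵥ (S⁻¹ *ᵥ (R *ᵥ x)) = x ⬝ᵥ x := by
    rw [dotProduct_comm, dotProduct_mulVec, ← mulVec_transpose, hRsymm, mulVec_mulVec,
      mulVec_mulVec, ← hRR, Matrix.mul_inv_rev, Matrix.mul_nonsing_inv_cancel_left _ _ hunit,
      Matrix.nonsing_inv_mul _ hunit, one_mulVec]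
  have hsubst := integral_comp_mulVec hdetR₀ fun x => exp (-(1 / 2) * (x ⬝ᵥ (S⁻¹ *ᵥ x)))
  simp only [hquad, integral_exp_neg_half_dotProduct_self] at hsubst
  have hpow : √((2 * π) ^ Fintype.card ι) = √(2 * π) ^ Fintype.card ι := by
    rw [← sq_sqrt (by positivity : (0 : ℝ) ≤ 2 * π), ← pow_mul, pow_mul',
      sqrt_sq (by positivity), sq_sqrt (by positivity)]
  rw [abs_of_pos (hdetR ▸ sqrt_pos.2 hS.det_pos), smul_eq_mul] at hsubst
  rw [sqrt_mul (by positivity), hpow, hsubst, ← hdetR]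
  field_simp

theorem integral_gaussianDensity {μ : ι → ℝ} {S : Matrix ι ι ℝ} (hS : S.PosDef) :
    ∫ x, gaussianDensity μ S x = 1 := by
  have hc : 0 < (2 * π) ^ Fintype.card ι * S.det := by have := hS.det_pos; positivity
  unfold gaussianDensity
  rw [integral_const_mul,
    integral_sub_right_eq_self (fun x => exp (-(1 / 2) * (x ⬝ᵥ (S⁻¹ *ᵥ x)))) μ,
    integral_exp_neg_half_dotProduct_inv_mulVec hS, inv_mul_cancel₀ (sqrt_pos.2 hc).ne']

theorem gaussianDensity_pos {S : Matrix ι ι ℝ} (hS : S.PosDef) (μ x : ι → ℝ) :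
    0 < gaussianDensity μ S x := by
  have := hS.det_pos
  unfold gaussianDensity
  positivity

theorem measurable_gaussianDensity (μ : ι → ℝ) (S : Matrix ι ι ℝ) :
    Measurable (gaussianDensity μ S) := by
  unfold gaussianDensity
  fun_prop

theorem mul_exp_div_mul_exp_rpow_mul (c a b l : ℝ) :
    (c * exp a / (c * exp b)) ^ l * (c * exp b) = c * exp (l * a + (1 - l) * b) := by
  rcases eq_or_ne c 0 with rfl | hc
  · simp
  rw [mul_div_mul_left _ _ hc, ← exp_sub, ← exp_mul, mul_left_comm, ← exp_add]
  ring_nf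

theorem gaussianDensity_div_rpow_mul (μ₁ μ₂ : ι → ℝ) (S : Matrix ι ι ℝ) (l : ℝ) (x : ι → ℝ) :
    (gaussianDensity μ₁ S x / gaussianDensity μ₂ S x) ^ l * gaussianDensity μ₂ S x
      = exp (l * (l - 1) / 2 * ((μ₁ - μ₂) ⬝ᵥ (S⁻¹ *ᵥ (μ₁ - μ₂))))
        * gaussianDensity (l • μ₁ + (1 - l) • μ₂) S x := by
  have hcomb : l • (x - μ₁) + (1 - l) • (x - μ₂) = x - (l • μ₁ + (1 - l) • μ₂) := by
    rw [smul_sub, smul_sub, sub_smul, one_smul]; abel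
  have hdiff : (x - μ₁) - (x - μ₂) = -(μ₁ - μ₂) := by abel
  unfold gaussianDensity
  rw [mul_exp_div_mul_exp_rpow_mul, mul_left_comm (exp _), ← exp_add]
  congr 2
  have := mul_dotProduct_mulVec_add_mul_dotProduct_mulVec S⁻¹ (x - μ₁) (x - μ₂) l
  rw [hcomb, hdiff, neg_dotProduct, mulVec_neg, dotProduct_neg, neg_neg] at this
  linear_combination (-1 / 2) * this

theorem renyiDiv_multivariateGaussian {S : Matrix ι ι ℝ} (hS : S.PosDef) (μ₁ μ₂ : ι → ℝ) {l : ℝ}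
    (hl : l ≠ 1) :
    renyiDiv l (multivariateGaussian μ₁ S) (multivariateGaussian μ₂ S)
      = l / 2 * ((μ₁ - μ₂) ⬝ᵥ (S⁻¹ *ᵥ (μ₁ - μ₂))) := by
  rw [multivariateGaussian, multivariateGaussian,
    renyiDiv_withDensity_ofReal (measurable_gaussianDensity _ _) (measurable_gaussianDensity _ _)
      (fun x => (gaussianDensity_pos hS _ x).le) (gaussianDensity_pos hS _)]
  simp_rw [gaussianDensity_div_rpow_mul]
  rw [integral_const_mul, integral_gaussianDensity hS, mul_one, log_exp]
  field_simp [sub_ne_zero.2 hl]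

end Gaussian

theorem dotProduct_SigmaEff_mulVec {m k : ℕ} {S : Matrix (Fin m ⊕ Fin k) (Fin m ⊕ Fin k) ℝ}
    (Sg : Matrix (Fin m ⊕ Fin k) (Fin m ⊕ Fin k) ℝ) (hS : S.IsHermitian) (e : Fin m → ℝ) :
    e ⬝ᵥ (SigmaEff S Sg *ᵥ e)
      = (S.toBlocks₂₁ *ᵥ (S.toBlocks₁₁⁻¹ *ᵥ e))
        ⬝ᵥ (((S.toBlocks₂₂ - S.toBlocks₂₁ * S.toBlocks₁₁⁻¹ * S.toBlocks₁₂) + Sg.toBlocks₂₂)⁻¹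
          *ᵥ (S.toBlocks₂₁ *ᵥ (S.toBlocks₁₁⁻¹ *ᵥ e))) := by
  have h₁₁ : S.toBlocks₁₁ᵀ = S.toBlocks₁₁ := by
    rw [← conjTranspose_eq_transpose_of_trivial]; exact hS.submatrix Sum.inl
  have h₂₁ : S.toBlocks₂₁ᵀ = S.toBlocks₁₂ := by
    rw [hS.toBlocks₂₁_eq, conjTranspose_eq_transpose_of_trivial, transpose_transpose]
  set W := S.toBlocks₂₁ * S.toBlocks₁₁⁻¹
  have hWt : Wᵀ = S.toBlocks₁₁⁻¹ * S.toBlocks₁₂ := by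
    rw [transpose_mul, transpose_nonsing_inv, h₁₁, h₂₁]
  have hquad (N : Matrix (Fin k) (Fin k) ℝ) :
      e ⬝ᵥ ((Wᵀ * N * W) *ᵥ e) = (W *ᵥ e) ⬝ᵥ (N *ᵥ (W *ᵥ e)) := by
    rw [← mulVec_mulVec, ← mulVec_mulVec, mulVec_transpose, dotProduct_comm,
      ← dotProduct_mulVec, dotProduct_comm]
  rw [mulVec_mulVec, ← hquad, hWt, SigmaEff]
  simp only [W, Matrix.mul_assoc]

theorem renyiDiv_condLaw_eq_general {m k : ℕ} (μ : (Fin m ⊕ Fin k) → ℝ)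
    (S Sg : Matrix (Fin m ⊕ Fin k) (Fin m ⊕ Fin k) ℝ)
    (hS : S.PosDef) (hSg : Sg.PosSemidef) (σs : ℝ) (hσs : 0 < σs)
    (si sj : Fin m → ℝ) (l : ℝ) (hl : 1 < l) :
    renyiDiv l (condLaw μ S Sg σs si) (condLaw μ S Sg σs sj)
      = l / 2 * (1 / σs ^ 2 * ((si - sj) ⬝ᵥ (si - sj))
          + (si - sj) ⬝ᵥ (SigmaEff S Sg *ᵥ (si - sj))) := by
  have hcov :
      (S.toBlocks₂₂ - S.toBlocks₂₁ * S.toBlocks₁₁⁻¹ * S.toBlocks₁₂ + Sg.toBlocks₂₂).PosDef :=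
    hS.schurComplement₁₁.add_posSemidef hSg.toBlocks₂₂
  have hnoise : (σs ^ 2 • (1 : Matrix (Fin m) (Fin m) ℝ)).PosDef :=
    PosDef.one.smul (by positivity)
  have hnoise_inv : (σs ^ 2 • (1 : Matrix (Fin m) (Fin m) ℝ))⁻¹ = (σs ^ 2)⁻¹ • 1 :=
    inv_eq_left_inv (by rw [smul_mul_smul_comm, inv_mul_cancel₀ (by positivity), one_mul, one_smul])
  rw [condLaw, condLaw, renyiDiv_multivariateGaussian (hnoise.fromBlocks_zero hcov) _ _ hl.ne',
    ← Sum.elim_sub_sub, add_sub_add_left_eq_sub, ← mulVec_sub, ← mulVec_sub,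
    sub_sub_sub_cancel_right, inv_fromBlocks_zero_zero (iff_of_true hnoise.isUnit hcov.isUnit),
    sumElim_dotProduct_fromBlocks_zero_mulVec, hnoise_inv,
    dotProduct_SigmaEff_mulVec Sg hS.isHermitian]
  simp only [smul_mulVec, one_mulVec, dotProduct_smul, smul_eq_mul, one_div]

/-- Exact CIP loss for Gaussian process priors under an additive Gaussian mechanism. -/
theorem renyiDiv_condLaw_eq {m k : ℕ} (μ : (Fin m ⊕ Fin k) → ℝ)
    (S Sg : Matrix (Fin m ⊕ Fin k) (Fin m ⊕ Fin k) ℝ)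
    (hS : S.PosDef) (hSg : Sg.PosSemidef) (σs : ℝ) (hσs : 0 < σs)
    (hSgSS : Sg.toBlocks₁₁ = σs ^ 2 • 1) (hSgSU : Sg.toBlocks₁₂ = 0)
    (si sj : Fin m → ℝ) (l : ℝ) (hl : 1 < l) :
    renyiDiv l (condLaw μ S Sg σs si) (condLaw μ S Sg σs sj)
      = l / 2 * (1 / σs ^ 2 * ((si - sj) ⬝ᵥ (si - sj))
          + (si - sj) ⬝ᵥ (SigmaEff S Sg *ᵥ (si - sj))) :=
  renyiDiv_condLaw_eq_general μ S Sg hS hSg σs hσs si sj l hl
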